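/- arXiv:1709.02938 — 7 statements merged into one kernel-verified Lean document; each statement's English description precedes it below -/
import Mathlib

section
/- For any n ≥ 1 and digits q_1, …, q_n ∈ {0,1,2,3}, the composition applied to the origin satisfies (T_{q_1} ∘ T_{q_2} ∘ ⋯ ∘ T_{q_n})((0,0)) = Σ_{j=1}^n 2^{−j} · H_0^{e_{0j}} · H_3^{e_{3j}} · h_{q_j}, where e_{0j} = (number of indices i < j with q_i = 0) mod 2 and e_{3j} = (number of indices i < j with q_i = 3) mod 2. -/
open Matrix

noncomputable section

abbrev E2 := EuclideanSpace ℝ (Fin 2)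

def toE (v : Fin 2 → ℝ) : E2 := WithLp.toLp 2 v

def pt (x y : ℝ) : E2 := WithLp.toLp 2 ![x, y]

def Hm : Fin 4 → Matrix (Fin 2) (Fin 2) ℝ
  | 0 => !![0, 1; 1, 0]
  | 1 => 1
  | 2 => 1
  | 3 => !![0, -1; -1, 0]

def hv : Fin 4 → E2
  | 0 => pt 0 0
  | 1 => pt 0 1
  | 2 => pt 1 1
  | 3 => pt 2 1

def T (i : Fin 4) (v : E2) : E2 :=
  (1 / 2 : ℝ) • toE ((Hm i).mulVec v) + (1 / 2 : ℝ) • hv i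

def Q : Set E2 := {p | p 0 ∈ Set.Icc (0:ℝ) 1 ∧ p 1 ∈ Set.Icc (0:ℝ) 1}

def Fv : Fin 4 → E2
  | 0 => pt (1/4) (1/4)
  | 1 => pt (1/4) (3/4)
  | 2 => pt (3/4) (3/4)
  | 3 => pt (3/4) (1/4)

/-- Composition T_{q 0} ∘ ⋯ ∘ T_{q (n-1)}. -/
def compT : (n : ℕ) → (Fin n → Fin 4) → E2 → E2
  | 0, _ => id
  | n + 1, q => T (q 0) ∘ compT n (fun j => q j.succ)

/-- Node from m+1 digits q 0, …, q m : (T_{q 0} ∘ ⋯ ∘ T_{q (m-1)}) (F_{q m}). -/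
def nodeAux : ℕ → (ℕ → Fin 4) → E2
  | 0, q => Fv (q 0)
  | m + 1, q => T (q 0) (nodeAux m (fun j => q (j + 1)))

/-- j-th base-4 digit of k, for the n-digit expansion (j = 0 is the leading digit). -/
def hdigit (n k j : ℕ) : Fin 4 := ⟨k / 4 ^ (n - 1 - j) % 4, Nat.mod_lt _ (by norm_num)⟩

/-- The k-th node of the n-th order Hilbert curve. -/
def node (n k : ℕ) : E2 := nodeAux (n - 1) (hdigit n k)



/-! Each `T i` is `v ↦ ½ Hᵢ v + ½ hᵢ`, so unrolling the composition at the origin gives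
`∑ⱼ 2^{-(j+1)} H_{q₀} ⋯ H_{q_{j-1}} h_{qⱼ}`. Since `H₁ = H₂ = 1` and `H₀`, `H₃` are commuting
involutions, the ordered product `H_{q₀} ⋯ H_{q_{j-1}}` only depends on the parities of the numbers
of earlier digits equal to `0` and to `3`. -/

open Finset

lemma Hm_zero_sq : Hm 0 ^ 2 = 1 := by
  simp [Hm, sq, one_fin_two]

lemma Hm_three_sq : Hm 3 ^ 2 = 1 := by
  simp [Hm, sq, one_fin_two]

lemma commute_Hm_zero_Hm_three : Commute (Hm 0) (Hm 3) := by
  simp [Commute, SemiconjBy, Hm]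

lemma Hm_mul_pow_mul_pow (i : Fin 4) (a b : ℕ) :
    Hm i * (Hm 0 ^ a * Hm 3 ^ b) =
      Hm 0 ^ (a + if i = 0 then 1 else 0) * Hm 3 ^ (b + if i = 3 then 1 else 0) := by
  fin_cases i
  · simp [pow_succ', mul_assoc]
  · simp [Hm]
  · simp [Hm]
  · simp only [Fin.reduceFinMk, Fin.reduceEq, if_false, if_true, add_zero]
    rw [← mul_assoc, (commute_Hm_zero_Hm_three.pow_left a).symm.eq, mul_assoc, ← pow_succ']

section CountBefore

variable {α : Type*} [DecidableEq α] {n : ℕ}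

def countBefore (q : Fin n → α) (c : α) (j : Fin n) : ℕ :=
  #{i | i < j ∧ q i = c}

@[simp] lemma countBefore_zero (q : Fin (n + 1) → α) (c : α) : countBefore q c 0 = 0 := by
  simp [countBefore]

lemma countBefore_succ (q : Fin (n + 1) → α) (c : α) (j : Fin n) :
    countBefore q c j.succ = countBefore (fun i => q i.succ) c j + if q 0 = c then 1 else 0 := by
  simp only [countBefore, card_filter, Fin.sum_univ_succ, Fin.succ_lt_succ_iff, Fin.succ_pos,
    true_and, add_comm]

end CountBefore

lemma toE_mulVec (A : Matrix (Fin 2) (Fin 2) ℝ) (v : E2) : toE (A *ᵥ v) = toEuclideanLin A v :=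
  rfl

lemma T_apply (i : Fin 4) (v : E2) :
    T i v = (1 / 2 : ℝ) • toEuclideanLin (Hm i) v + (1 / 2 : ℝ) • hv i :=
  rfl

lemma compT_succ_apply {n : ℕ} (q : Fin (n + 1) → Fin 4) (v : E2) :
    compT (n + 1) q v = T (q 0) (compT n (fun j => q j.succ) v) :=
  rfl

lemma compT_apply_zero_eq_sum (n : ℕ) (q : Fin n → Fin 4) :
    compT n q 0 = ∑ j : Fin n, ((1 : ℝ) / 2 ^ ((j : ℕ) + 1)) •
      toEuclideanLin (Hm 0 ^ countBefore q 0 j * Hm 3 ^ countBefore q 3 j) (hv (q j)) := by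
  induction n with
  | zero => simp [compT]
  | succ n ih =>
    rw [compT_succ_apply, ih, T_apply, Fin.sum_univ_succ, add_comm]
    simp only [map_sum, map_smul, smul_sum, smul_smul, countBefore_succ, countBefore_zero]
    congr 1
    · simp
    · refine sum_congr rfl fun j _ => ?_
      rw [← Hm_mul_pow_mul_pow, toLpLin_mul_same _ (Hm (q 0)), LinearMap.comp_apply,
        Fin.val_succ, pow_succ' _ (j + 1), one_div_mul_one_div]

theorem compT_apply_origin_general (n : ℕ) (q : Fin n → Fin 4) :
    compT n q 0 =
      ∑ j : Fin n, ((1:ℝ) / 2 ^ ((j : ℕ) + 1)) •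
        toE ((Hm 0 ^ ((Finset.univ.filter fun i : Fin n => i < j ∧ q i = 0).card % 2) *
              Hm 3 ^ ((Finset.univ.filter fun i : Fin n => i < j ∧ q i = 3).card % 2)).mulVec
              (hv (q j))) := by
  simp only [← pow_eq_pow_mod _ Hm_zero_sq, ← pow_eq_pow_mod _ Hm_three_sq, toE_mulVec]
  exact compT_apply_zero_eq_sum n q

/-- the composition applied to the origin equals
Σ_{j=1}^n 2^{−j} · H_0^{e_{0j}} · H_3^{e_{3j}} · h_{q_j}. -/
theorem compT_apply_origin (n : ℕ) (hn : 1 ≤ n) (q : Fin n → Fin 4) :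
    compT n q 0 =
      ∑ j : Fin n, ((1:ℝ) / 2 ^ ((j : ℕ) + 1)) •
        toE ((Hm 0 ^ ((Finset.univ.filter fun i : Fin n => i < j ∧ q i = 0).card % 2) *
              Hm 3 ^ ((Finset.univ.filter fun i : Fin n => i < j ∧ q i = 3).card % 2)).mulVec
              (hv (q j))) :=
  compT_apply_origin_general n q

end
end

section
/- There exists a continuous surjective map f : [0,1] → [0,1]×[0,1] (Hilbert's space-filling curve) such that for every n ≥ 1 and every integer 0 ≤ k < 4^n with base-4 digits q_1, …, q_n (i.e. k = Σ_{j=1}^n q_j·4^{n−j}), f maps the interval [k/4^n, (k+1)/4^n] into the sub-square (T_{q_1} ∘ ⋯ ∘ T_{q_n})(Q). -/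
open Matrix

noncomputable section

/-!
Hilbert's curve is the solution of the self-similarity equation `f x = T i (f (4 * x - i))` on
the `i`-th quarter of `[0, 1]`: iterating the equation contracts by `1 / 2`, so it has a solution
with values in `Q`. As `T 0` fixes `(0, 0)` and `T 3` fixes `(1, 0)`, the solution satisfies
`f 0 = (0, 0)` and `f 1 = (1, 0)`, and `T (i + 1) (0, 0) = T i (1, 0)` makes neighbouring pieces
agree at the junctions. Unwinding the equation `n` times, `f` maps `[k / 4 ^ n, (k + 1) / 4 ^ n]`
into the square `T q₁ ∘ ⋯ ∘ T qₙ '' Q` of side `2⁻ⁿ`. Nearby points lie in adjacent such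
intervals, which gives continuity; and these squares cover `Q`, so the compact set `f '' [0, 1]`
is dense in `Q`.
-/

open Set
open scoped NNReal

@[simp] lemma pt_zero (x y : ℝ) : pt x y 0 = x := rfl

@[simp] lemma pt_one (x y : ℝ) : pt x y 1 = y := rfl

lemma eq_pt (v : E2) : v = pt (v 0) (v 1) := by
  ext j; fin_cases j <;> rfl

lemma T_zero_apply (v : E2) : T 0 v = pt (v 1 / 2) (v 0 / 2) := by
  ext j; fin_cases j <;> simp [T, Hm, hv, pt, toE, dotProduct] <;> ring

lemma T_one_apply (v : E2) : T 1 v = pt (v 0 / 2) (v 1 / 2 + 1 / 2) := by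
  ext j; fin_cases j <;> simp [T, Hm, hv, pt, toE] <;> ring

lemma T_two_apply (v : E2) : T 2 v = pt (v 0 / 2 + 1 / 2) (v 1 / 2 + 1 / 2) := by
  ext j; fin_cases j <;> simp [T, Hm, hv, pt, toE] <;> ring

lemma T_three_apply (v : E2) : T 3 v = pt (1 - v 1 / 2) (1 / 2 - v 0 / 2) := by
  ext j; fin_cases j <;> simp [T, Hm, hv, pt, toE, dotProduct] <;> ring

lemma dist_eq_sqrt (u v : E2) : dist u v = √((u 0 - v 0) ^ 2 + (u 1 - v 1) ^ 2) := by
  simp [EuclideanSpace.dist_eq, Fin.sum_univ_two, Real.dist_eq, sq_abs]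

lemma dist_T (i : Fin 4) (u v : E2) : dist (T i u) (T i v) = dist u v / 2 := by
  have h4 : √4 = 2 := by rw [show (4 : ℝ) = 2 ^ 2 by norm_num, Real.sqrt_sq zero_le_two]
  rw [dist_eq_sqrt, dist_eq_sqrt, ← h4, ← Real.sqrt_div' _ (by norm_num : (0:ℝ) ≤ 4)]
  congr 1
  fin_cases i <;> simp [T_zero_apply, T_one_apply, T_two_apply, T_three_apply] <;> ring

lemma contractingWith_T (i : Fin 4) : ContractingWith (1 / 2) (T i) :=
  ⟨by norm_num, .of_dist_le_mul fun u v => by rw [dist_T]; norm_num; linarith⟩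

lemma mem_Q_iff (v : E2) : v ∈ Q ↔ (0 ≤ v 0 ∧ v 0 ≤ 1) ∧ (0 ≤ v 1 ∧ v 1 ≤ 1) := Iff.rfl

lemma T_mapsTo_Q (i : Fin 4) : MapsTo (T i) Q Q := by
  intro v hv
  rw [mem_Q_iff] at hv ⊢
  fin_cases i <;>
    simp only [Fin.zero_eta, Fin.mk_one, Fin.reduceFinMk, T_zero_apply, T_one_apply, T_two_apply,
      T_three_apply, pt_zero, pt_one] <;> constructor <;> constructor <;> linarith

lemma exists_T_eq_of_mem_Q {v : E2} (hv : v ∈ Q) : ∃ i, ∃ w ∈ Q, T i w = v := by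
  rw [mem_Q_iff] at hv
  rw [eq_pt v]
  rcases le_total (v 0) (1 / 2) with h0 | h0 <;> rcases le_total (v 1) (1 / 2) with h1 | h1
  · refine ⟨0, pt (2 * v 1) (2 * v 0), ?_, ?_⟩
    · rw [mem_Q_iff]; simp only [pt_zero, pt_one]; constructor <;> constructor <;> linarith
    · rw [T_zero_apply, pt_zero, pt_one]; congr 1 <;> ring
  · refine ⟨1, pt (2 * v 0) (2 * v 1 - 1), ?_, ?_⟩
    · rw [mem_Q_iff]; simp only [pt_zero, pt_one]; constructor <;> constructor <;> linarith
    · rw [T_one_apply, pt_zero, pt_one]; congr 1 <;> ring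
  · refine ⟨3, pt (1 - 2 * v 1) (2 - 2 * v 0), ?_, ?_⟩
    · rw [mem_Q_iff]; simp only [pt_zero, pt_one]; constructor <;> constructor <;> linarith
    · rw [T_three_apply, pt_zero, pt_one]; congr 1 <;> ring
  · refine ⟨2, pt (2 * v 0 - 1) (2 * v 1 - 1), ?_, ?_⟩
    · rw [mem_Q_iff]; simp only [pt_zero, pt_one]; constructor <;> constructor <;> linarith
    · rw [T_two_apply, pt_zero, pt_one]; congr 1 <;> ring

lemma T_zero_origin : T 0 (pt 0 0) = pt 0 0 := by
  rw [T_zero_apply]; simp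

lemma T_three_pt_one_zero : T 3 (pt 1 0) = pt 1 0 := by
  rw [T_three_apply]; norm_num

lemma T_succ_origin : ∀ {i : Fin 4}, i ≠ 3 → T (i + 1) (pt 0 0) = T i (pt 1 0)
  | 0, _ => by norm_num [T_zero_apply, T_one_apply]
  | 1, _ => show T 2 _ = _ by norm_num [T_one_apply, T_two_apply]
  | 2, _ => show T 3 _ = _ by norm_num [T_two_apply, T_three_apply]
  | 3, h => absurd rfl h

lemma dist_le_two_of_mem_Q {u v : E2} (hu : u ∈ Q) (hv : v ∈ Q) : dist u v ≤ 2 := by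
  rw [mem_Q_iff] at hu hv
  rw [dist_eq_sqrt, Real.sqrt_le_iff]
  constructor <;> nlinarith

lemma isClosed_Q : IsClosed Q :=
  (isClosed_Icc.preimage (EuclideanSpace.proj (0 : Fin 2)).continuous).inter
    (isClosed_Icc.preimage (EuclideanSpace.proj (1 : Fin 2)).continuous)

lemma isBounded_Q : Bornology.IsBounded Q :=
  Metric.isBounded_iff.2 ⟨2, fun _ hu _ hv => dist_le_two_of_mem_Q hu hv⟩

lemma origin_mem_Q : pt 0 0 ∈ Q := by
  rw [mem_Q_iff]; norm_num

theorem exists_forall_mem_and_eq_apply_comp {α β : Type*} [MetricSpace β] [CompleteSpace β]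
    {S : Set β} (hSc : IsClosed S) (hSb : Bornology.IsBounded S) (hSn : S.Nonempty)
    {K : ℝ≥0} (F : α → β → β) (hF : ∀ a, ContractingWith K (F a))
    (hFS : ∀ a, MapsTo (F a) S S) (σ : α → α) :
    ∃ f : α → β, (∀ a, f a ∈ S) ∧ ∀ a, f a = F a (f (σ a)) := by
  obtain ⟨p, hp⟩ := hSn
  let Φ : (α → β) → α → β := fun g a => F a (g (σ a))
  let g : ℕ → α → β := fun n => Φ^[n] fun _ => p
  have g_succ (n : ℕ) (a : α) : g (n + 1) a = F a (g n (σ a)) := by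
    simp only [g, Function.iterate_succ_apply', Φ]
  have g_mem (n : ℕ) (a : α) : g n a ∈ S := by
    induction n generalizing a with
    | zero => exact hp
    | succ n ih => rw [g_succ]; exact hFS a (ih _)
  have g_dist (n : ℕ) (a : α) : dist (g n a) (g (n + 1) a) ≤ Metric.diam S * K ^ n := by
    induction n generalizing a with
    | zero => simpa using Metric.dist_le_diam_of_mem hSb (g_mem 0 a) (g_mem 1 a)
    | succ n ih =>
      rw [g_succ, g_succ]
      calc _ ≤ K * dist (g n (σ a)) (g (n + 1) (σ a)) := (hF a).2.dist_le_mul _ _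
        _ ≤ K * (Metric.diam S * K ^ n) := by gcongr; exact ih _
        _ = Metric.diam S * K ^ (n + 1) := by ring
  choose f hf using fun a =>
    cauchySeq_tendsto_of_complete (cauchySeq_of_le_geometric _ _ (hF a).1 (g_dist · a))
  refine ⟨f, fun a => hSc.mem_of_tendsto (hf a) (.of_forall (g_mem · a)), fun a => ?_⟩
  refine tendsto_nhds_unique ((Filter.tendsto_add_atTop_iff_nat 1).2 (hf a)) ?_
  simp only [g_succ]
  exact ((hF a).2.continuous.tendsto _).comp (hf (σ a))

lemma compT_succ_cons (n : ℕ) (i : Fin 4) (q : Fin n → Fin 4) :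
    compT (n + 1) (Fin.cons i q) = T i ∘ compT n q := by
  simp [compT]

lemma dist_compT (n : ℕ) (q : Fin n → Fin 4) (u v : E2) :
    dist (compT n q u) (compT n q v) = dist u v / 2 ^ n := by
  induction n generalizing u v with
  | zero => simp [compT]
  | succ n ih =>
    simp only [compT, Function.comp_apply, dist_T, ih]
    ring

lemma dist_le_of_mem_image_compT {n : ℕ} {q : Fin n → Fin 4} {u v : E2}
    (hu : u ∈ compT n q '' Q) (hv : v ∈ compT n q '' Q) : dist u v ≤ 2 / 2 ^ n := by
  obtain ⟨u, hu, rfl⟩ := hu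
  obtain ⟨v, hv, rfl⟩ := hv
  rw [dist_compT]
  gcongr
  exact dist_le_two_of_mem_Q hu hv

lemma exists_mem_image_compT (n : ℕ) {v : E2} (hv : v ∈ Q) :
    ∃ q : Fin n → Fin 4, v ∈ compT n q '' Q := by
  induction n generalizing v with
  | zero => exact ⟨Fin.elim0, v, hv, rfl⟩
  | succ n ih =>
    obtain ⟨i, w, hw, rfl⟩ := exists_T_eq_of_mem_Q hv
    obtain ⟨q, u, hu, rfl⟩ := ih hw
    exact ⟨Fin.cons i q, u, hu, by rw [compT_succ_cons]; rfl⟩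

def base4Value (n : ℕ) (q : Fin n → Fin 4) : ℕ := ∑ j : Fin n, (q j : ℕ) * 4 ^ (n - 1 - (j : ℕ))

lemma base4Value_succ (n : ℕ) (q : Fin (n + 1) → Fin 4) :
    base4Value (n + 1) q = q 0 * 4 ^ n + base4Value n (Fin.tail q) := by
  rw [base4Value, Fin.sum_univ_succ]
  congr 1
  refine Finset.sum_congr rfl fun j _ => ?_
  simp only [Fin.val_succ, Fin.tail]
  congr 2
  omega

lemma base4Value_eq_finFunctionFinEquiv (n : ℕ) (q : Fin n → Fin 4) :
    base4Value n q = finFunctionFinEquiv (q ∘ Fin.rev) := by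
  rw [finFunctionFinEquiv_apply, base4Value]
  refine Fintype.sum_equiv Fin.revPerm _ _ fun j => ?_
  simp only [Fin.revPerm_apply, Function.comp_apply, Fin.rev_rev, Fin.val_rev]
  congr 2
  omega

lemma base4Value_lt (n : ℕ) (q : Fin n → Fin 4) : base4Value n q < 4 ^ n := by
  rw [base4Value_eq_finFunctionFinEquiv]
  exact Fin.is_lt _

lemma exists_base4Value_eq {n k : ℕ} (hk : k < 4 ^ n) : ∃ q, base4Value n q = k :=
  ⟨finFunctionFinEquiv.symm ⟨k, hk⟩ ∘ Fin.rev, by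
    rw [base4Value_eq_finFunctionFinEquiv, Function.comp_assoc, Fin.rev_involutive.comp_self,
      Function.comp_id, Equiv.apply_symm_apply]⟩

def cell (n k : ℕ) : Set ℝ := Icc ((k : ℝ) / 4 ^ n) (((k : ℝ) + 1) / 4 ^ n)

lemma mem_cell_succ {n a k : ℕ} (hk : k < 4 ^ n) {x : ℝ} (hx : x ∈ cell (n + 1) (a * 4 ^ n + k)) :
    x ∈ Icc ((a : ℝ) / 4) ((a + 1) / 4) ∧ 4 * x - a ∈ cell n k := by
  have ht : (0 : ℝ) < 4 ^ n := by positivity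
  have hk' : (k : ℝ) + 1 ≤ 4 ^ n := by exact_mod_cast hk
  obtain ⟨h₁, h₂⟩ := hx
  push_cast at h₁ h₂
  rw [pow_succ, div_le_iff₀ (by positivity)] at h₁
  rw [pow_succ, le_div_iff₀ (by positivity)] at h₂
  refine ⟨⟨?_, ?_⟩, ?_, ?_⟩
  · rw [div_le_iff₀ (by norm_num)]
    refine le_of_mul_le_mul_right ?_ ht
    nlinarith
  · rw [le_div_iff₀ (by norm_num)]
    refine le_of_mul_le_mul_right ?_ ht
    nlinarith
  · rw [div_le_iff₀ ht]; linarith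
  · rw [le_div_iff₀ ht]; linarith

def quarter (x : ℝ) : Fin 4 := ⟨min ⌊4 * x⌋₊ 3, by omega⟩

lemma quarter_eq_of_mem_Ico {i : Fin 4} {x : ℝ} (hx : x ∈ Ico ((i : ℝ) / 4) ((i + 1) / 4)) :
    quarter x = i := by
  have hfloor : ⌊4 * x⌋₊ = i := by
    rw [Nat.floor_eq_iff (by linarith [hx.1, (by positivity : (0 : ℝ) ≤ i / 4)])]
    constructor <;> linarith [hx.1, hx.2]
  ext
  simp only [quarter, hfloor]
  omega

lemma quarter_eq_three {x : ℝ} (hx : 3 / 4 ≤ x) : quarter x = 3 := by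
  have : 3 ≤ ⌊4 * x⌋₊ := Nat.le_floor (by push_cast; linarith)
  ext
  simp only [quarter]
  omega

structure IsHilbertCurve (f : ℝ → E2) : Prop where
  mem_Q : ∀ x, f x ∈ Q
  apply_eq : ∀ x, f x = T (quarter x) (f (4 * x - quarter x))

lemma exists_isHilbertCurve : ∃ f, IsHilbertCurve f := by
  obtain ⟨f, hQ, hf⟩ := exists_forall_mem_and_eq_apply_comp isClosed_Q isBounded_Q
    ⟨_, origin_mem_Q⟩ (fun x => T (quarter x)) (fun _ => contractingWith_T _)
    (fun _ => T_mapsTo_Q _) (fun x => 4 * x - quarter x)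
  exact ⟨f, hQ, hf⟩

namespace IsHilbertCurve

variable {f : ℝ → E2}

lemma apply_zero (hf : IsHilbertCurve f) : f 0 = pt 0 0 := by
  have hfix : Function.IsFixedPt (T 0) (f 0) := by
    have h := hf.apply_eq 0
    rw [quarter_eq_of_mem_Ico (i := 0) (by norm_num)] at h
    simp only [Fin.isValue, Fin.val_zero, Nat.cast_zero, mul_zero, sub_zero] at h
    exact h.symm
  exact (contractingWith_T 0).fixedPoint_unique' hfix T_zero_origin

lemma apply_one (hf : IsHilbertCurve f) : f 1 = pt 1 0 := by
  have hfix : Function.IsFixedPt (T 3) (f 1) := by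
    have h := hf.apply_eq 1
    rw [quarter_eq_three (by norm_num)] at h
    norm_num at h
    exact h.symm
  exact (contractingWith_T 3).fixedPoint_unique' hfix T_three_pt_one_zero

lemma apply_eq_of_mem_Icc (hf : IsHilbertCurve f) (i : Fin 4) {x : ℝ}
    (hx : x ∈ Icc ((i : ℝ) / 4) ((i + 1) / 4)) : f x = T i (f (4 * x - i)) := by
  rcases hx.2.lt_or_eq with hlt | rfl
  · rw [hf.apply_eq x, quarter_eq_of_mem_Ico ⟨hx.1, hlt⟩]
  by_cases h3 : i = 3
  · subst h3
    rw [hf.apply_eq, quarter_eq_three (by norm_num)]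
  have hsucc : ((i + 1 : Fin 4) : ℕ) = i + 1 :=
    Fin.val_add_one_of_lt (lt_of_le_of_ne (Fin.le_last i) h3)
  have hquarter : quarter ((i + 1) / 4) = i + 1 :=
    quarter_eq_of_mem_Ico (by push_cast [hsucc]; constructor <;> linarith)
  rw [hf.apply_eq, hquarter]
  push_cast [hsucc]
  rw [show 4 * ((i + 1) / 4) - (i + 1 : ℝ) = 0 by ring,
    show 4 * ((i + 1) / 4) - (i : ℝ) = 1 by ring, hf.apply_zero, hf.apply_one, T_succ_origin h3]

lemma mapsTo_cell (hf : IsHilbertCurve f) :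
    ∀ n (q : Fin n → Fin 4), MapsTo f (cell n (base4Value n q)) (compT n q '' Q)
  | 0, _, x, _ => ⟨f x, hf.mem_Q x, rfl⟩
  | n + 1, q, x, hx => by
    rw [base4Value_succ] at hx
    obtain ⟨hquarter, hrest⟩ := mem_cell_succ (base4Value_lt n _) hx
    obtain ⟨v, hv, hfv⟩ := hf.mapsTo_cell n (Fin.tail q) hrest
    exact ⟨v, hv, (congrArg (T (q 0)) hfv).trans (hf.apply_eq_of_mem_Icc (q 0) hquarter).symm⟩

end IsHilbertCurve

lemma exists_lt_mem_cell (n : ℕ) {x : ℝ} (hx : x ∈ Icc (0 : ℝ) 1) : ∃ k < 4 ^ n, x ∈ cell n k := by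
  have ht : (0 : ℝ) < 4 ^ n := by positivity
  rcases hx.2.lt_or_eq with hlt | rfl
  · have hx₀ : 0 ≤ 4 ^ n * x := mul_nonneg ht.le hx.1
    refine ⟨⌊4 ^ n * x⌋₊, ?_, ?_, ?_⟩
    · exact_mod_cast (Nat.floor_lt hx₀).2 (by push_cast; nlinarith)
    · rw [div_le_iff₀ ht, mul_comm x]; exact Nat.floor_le hx₀
    · rw [le_div_iff₀ ht, mul_comm x]; exact (Nat.lt_floor_add_one _).le
  · refine ⟨4 ^ n - 1, Nat.sub_lt (by positivity) one_pos, ?_, ?_⟩ <;>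
      push_cast [Nat.one_le_pow n 4 (by norm_num)]
    · rw [div_le_one ht]; linarith
    · rw [sub_add_cancel, div_self ht.ne']

lemma cell_subset_Icc {n k : ℕ} (hk : k < 4 ^ n) : cell n k ⊆ Icc 0 1 := by
  have ht : (0 : ℝ) < 4 ^ n := by positivity
  have hk' : (k : ℝ) + 1 ≤ 4 ^ n := by exact_mod_cast hk
  exact Icc_subset_Icc (by positivity) ((div_le_one ht).2 hk')

lemma div_mem_cell {n k m : ℕ} (h₁ : k ≤ m) (h₂ : m ≤ k + 1) : (m : ℝ) / 4 ^ n ∈ cell n k := by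
  constructor
  · gcongr
  · gcongr; exact_mod_cast h₂

lemma le_succ_of_mem_cell {n k l : ℕ} {x y : ℝ} (hx : x ∈ cell n k) (hy : y ∈ cell n l)
    (hxy : |x - y| < 1 / 4 ^ n) : k ≤ l + 1 := by
  have ht : (0 : ℝ) < 4 ^ n := by positivity
  have : (k : ℝ) / 4 ^ n < (l + 2) / 4 ^ n := by
    calc (k : ℝ) / 4 ^ n ≤ x := hx.1
      _ < y + 1 / 4 ^ n := by linarith [le_abs_self (x - y)]
      _ ≤ (l + 1) / 4 ^ n + 1 / 4 ^ n := by linarith [hy.2]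
      _ = (l + 2) / 4 ^ n := by ring
  have : (k : ℝ) < l + 2 := (div_lt_div_iff_of_pos_right ht).1 this
  have : k < l + 2 := by exact_mod_cast this
  omega

lemma exists_div_two_pow_lt (C : ℝ) {ε : ℝ} (hε : 0 < ε) : ∃ n : ℕ, C / 2 ^ n < ε :=
  ((tendsto_const_nhds.div_atTop (tendsto_pow_atTop_atTop_of_one_lt one_lt_two)).eventually
    (gt_mem_nhds hε)).exists

lemma continuousOn_Icc_of_dist_le_of_mem_cell {β : Type*} [PseudoMetricSpace β] {g : ℝ → β}
    {C : ℝ} (h : ∀ n k, k < 4 ^ n → ∀ x ∈ cell n k, ∀ y ∈ cell n k, dist (g x) (g y) ≤ C / 2 ^ n) :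
    ContinuousOn g (Icc 0 1) := by
  refine Metric.continuousOn_iff.2 fun x hx ε hε => ?_
  obtain ⟨n, hn⟩ := exists_div_two_pow_lt (2 * C) hε
  refine ⟨1 / 4 ^ n, by positivity, fun y hy hyx => ?_⟩
  rw [Real.dist_eq] at hyx
  obtain ⟨k, hk, hxk⟩ := exists_lt_mem_cell n hx
  obtain ⟨l, hl, hyl⟩ := exists_lt_mem_cell n hy
  -- `x` and `y` lie in equal or adjacent cells, which share the point `max k l / 4 ^ n`.
  have hlk := le_succ_of_mem_cell hyl hxk hyx
  have hkl := le_succ_of_mem_cell hxk hyl (by rwa [abs_sub_comm])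
  set c : ℝ := (max k l : ℕ) / 4 ^ n
  have hck : c ∈ cell n k := div_mem_cell (le_max_left _ _) (max_le le_self_add hlk)
  have hcl : c ∈ cell n l := div_mem_cell (le_max_right _ _) (max_le hkl le_self_add)
  calc dist (g y) (g x) ≤ dist (g y) (g c) + dist (g c) (g x) := dist_triangle _ _ _
    _ ≤ C / 2 ^ n + C / 2 ^ n := add_le_add (h n l hl _ hyl _ hcl) (h n k hk _ hck _ hxk)
    _ = 2 * C / 2 ^ n := by ring
    _ < ε := hn

lemma surjOn_Q_of_mapsTo_cell {g : ℝ → E2} (hg : ContinuousOn g (Icc 0 1))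
    (hcell : ∀ n q, MapsTo g (cell n (base4Value n q)) (compT n q '' Q)) :
    SurjOn g (Icc 0 1) Q := by
  intro v hv
  rw [← (isCompact_Icc.image_of_continuousOn hg).isClosed.closure_eq, Metric.mem_closure_iff]
  intro ε hε
  obtain ⟨n, hn⟩ := exists_div_two_pow_lt 2 hε
  obtain ⟨q, hq⟩ := exists_mem_image_compT n hv
  have hx : (base4Value n q : ℝ) / 4 ^ n ∈ cell n (base4Value n q) :=
    div_mem_cell le_rfl le_self_add
  exact ⟨_, mem_image_of_mem g (cell_subset_Icc (base4Value_lt n q) hx),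
    (dist_le_of_mem_image_compT hq (hcell n q hx)).trans_lt hn⟩

/-- existence of Hilbert's space-filling curve: a continuous surjection
f : [0,1] → Q mapping each interval [k/4ⁿ,(k+1)/4ⁿ] into the corresponding sub-square. -/
theorem hilbert_curve_exists :
    ∃ f : ℝ → E2, ContinuousOn f (Set.Icc 0 1) ∧
      Set.MapsTo f (Set.Icc 0 1) Q ∧ Set.SurjOn f (Set.Icc 0 1) Q ∧
      ∀ n : ℕ, 1 ≤ n → ∀ k : ℕ, k < 4 ^ n → ∀ q : Fin n → Fin 4,
        k = ∑ j : Fin n, (q j : ℕ) * 4 ^ (n - 1 - (j : ℕ)) →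
        Set.MapsTo f (Set.Icc ((k : ℝ) / 4 ^ n) (((k : ℝ) + 1) / 4 ^ n))
          (compT n q '' Q) := by
  obtain ⟨f, hf⟩ := exists_isHilbertCurve
  have hcont : ContinuousOn f (Icc 0 1) :=
    continuousOn_Icc_of_dist_le_of_mem_cell fun n k hk x hx y hy => by
      obtain ⟨q, rfl⟩ := exists_base4Value_eq hk
      exact dist_le_of_mem_image_compT (hf.mapsTo_cell n q hx) (hf.mapsTo_cell n q hy)
  refine ⟨f, hcont, fun x _ => hf.mem_Q x, surjOn_Q_of_mapsTo_cell hcont hf.mapsTo_cell, ?_⟩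
  rintro n - k - q rfl
  exact hf.mapsTo_cell n q

end
end

section
/- The n-th order Hilbert node map visits every sub-square center exactly once: for every n ≥ 1, the map k ↦ node_n(k) is a bijection from {0, 1, …, 4^n − 1} onto the grid of centers {((2i+1)/2^{n+1}, (2j+1)/2^{n+1}) : 0 ≤ i, j ≤ 2^n − 1}. -/
open Matrix

noncomputable section

/-!
Let `center n (i, j)` be the center of cell `(i, j)` of the `2ⁿ × 2ⁿ` grid of the unit square.
Each `T d` maps level-`n` centers to level-`(n+1)` centers, acting on indices by `cellT n d`,
which places the grid into the `d`-th quadrant (reflected in a diagonal for `d = 0, 3`), and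
`F d = T d (1/2, 1/2)`. Hence `node (n+1) k` is the center of the cell `hilbertCell (n+1) k` got by
applying these index maps along the base-4 digits of `k`. The four index maps together biject
`Fin 4 × grid n` onto `grid (n+1)`, and `k ↦ (leading digit, remainder)` bijects `[0, 4ⁿ⁺¹)` onto
`Fin 4 × [0, 4ⁿ)`, so induction on `n` shows that `hilbertCell n` bijects `[0, 4ⁿ)` onto the grid.
-/

def center (n : ℕ) (c : ℕ × ℕ) : E2 :=
  pt ((2 * (c.1 : ℝ) + 1) / 2 ^ (n + 1)) ((2 * (c.2 : ℝ) + 1) / 2 ^ (n + 1))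

def grid (n : ℕ) : Set (ℕ × ℕ) := Set.Iio (2 ^ n) ×ˢ Set.Iio (2 ^ n)

def cellT (n : ℕ) : Fin 4 → ℕ × ℕ → ℕ × ℕ
  | 0, (i, j) => (j, i)
  | 1, (i, j) => (i, j + 2 ^ n)
  | 2, (i, j) => (i + 2 ^ n, j + 2 ^ n)
  | 3, (i, j) => (2 ^ (n + 1) - 1 - j, 2 ^ n - 1 - i)

lemma center_injective (n : ℕ) : Function.Injective (center n) := by
  intro c c' h
  have h0 := congrArg (fun p : E2 => p 0) h
  have h1 := congrArg (fun p : E2 => p 1) h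
  simp only [center, pt, PiLp.toLp_apply, Matrix.cons_val_zero, Matrix.cons_val_one] at h0 h1
  have hpow : (2 : ℝ) ^ (n + 1) ≠ 0 := by positivity
  rw [div_left_inj' hpow] at h0 h1
  exact Prod.ext (by exact_mod_cast (by linarith : (c.1 : ℝ) = c'.1))
    (by exact_mod_cast (by linarith : (c.2 : ℝ) = c'.2))

lemma T_center (n : ℕ) (d : Fin 4) {c : ℕ × ℕ} (hc : c ∈ grid n) :
    T d (center n c) = center (n + 1) (cellT n d c) := by
  obtain ⟨i, j⟩ := c
  obtain ⟨hi, hj⟩ : i < 2 ^ n ∧ j < 2 ^ n := hc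
  have hj' : ((2 ^ (n + 1) - 1 - j : ℕ) : ℝ) = 2 * 2 ^ n - 1 - j := by
    rw [Nat.sub_sub, Nat.cast_sub (by rw [pow_succ]; omega)]; push_cast; ring
  have hi' : ((2 ^ n - 1 - i : ℕ) : ℝ) = 2 ^ n - 1 - i := by
    rw [Nat.sub_sub, Nat.cast_sub (by omega)]; push_cast; ring
  ext k
  fin_cases d <;> fin_cases k <;>
    simp [T, center, cellT, pt, toE, Hm, hv, hi', hj'] <;>
    field_simp <;> ring

lemma Fv_eq_T_center (d : Fin 4) : Fv d = T d (center 0 (0, 0)) := by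
  ext k
  fin_cases d <;> fin_cases k <;>
    simp [Fv, T, center, pt, toE, Hm, hv] <;> norm_num

lemma cellT_bijOn (n : ℕ) :
    Set.BijOn (fun p : Fin 4 × (ℕ × ℕ) => cellT n p.1 p.2) (Set.univ ×ˢ grid n) (grid (n + 1)) := by
  have hpow : 2 ^ (n + 1) = 2 * 2 ^ n := by ring
  refine ⟨?_, ?_, ?_⟩
  · rintro ⟨d, i, j⟩ ⟨-, hi, hj⟩
    simp only [grid, Set.mem_prod, Set.mem_Iio] at hi hj ⊢
    fin_cases d <;> simp only [cellT] <;> omega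
  · rintro ⟨d, i, j⟩ ⟨-, hi, hj⟩ ⟨d', i', j'⟩ ⟨-, hi', hj'⟩ h
    simp only [Set.mem_Iio] at hi hj hi' hj'
    fin_cases d <;> fin_cases d' <;> simp only [cellT, Prod.mk.injEq, true_and] at h ⊢ <;> omega
  · rintro ⟨a, b⟩ ⟨ha, hb⟩
    simp only [Set.mem_Iio] at ha hb
    simp only [Set.mem_image, Set.mem_prod, Set.mem_univ, true_and, grid, Set.mem_Iio, Prod.exists]
    rcases lt_or_ge a (2 ^ n) with ha' | ha' <;> rcases lt_or_ge b (2 ^ n) with hb' | hb'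
    · exact ⟨0, b, a, ⟨hb', ha'⟩, rfl⟩
    · exact ⟨1, a, b - 2 ^ n, ⟨ha', by omega⟩, by simp only [cellT]; congr; omega⟩
    · exact ⟨3, 2 ^ n - 1 - b, 2 ^ (n + 1) - 1 - a, ⟨by omega, by omega⟩,
        by simp only [cellT, Prod.mk.injEq]; omega⟩
    · exact ⟨2, a - 2 ^ n, b - 2 ^ n, ⟨by omega, by omega⟩,
        by simp only [cellT, Prod.mk.injEq]; omega⟩

lemma hdigit_zero_val (n k : ℕ) : (hdigit (n + 1) k 0 : ℕ) = k / 4 ^ n % 4 := rfl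

lemma hdigit_succ (m k j : ℕ) : hdigit (m + 2) k (j + 1) = hdigit (m + 1) (k % 4 ^ (m + 1)) j := by
  ext
  simp only [hdigit]
  rw [show m + 2 - 1 - (j + 1) = m - j by omega, show m + 1 - 1 - j = m - j by omega,
    show m + 1 = m - j + (m + 1 - (m - j)) by omega, pow_add, Nat.mod_mul_right_div_self,
    Nat.mod_mod_of_dvd _ (dvd_pow_self 4 (by omega))]

lemma node_succ (m k : ℕ) :
    node (m + 2) k = T (hdigit (m + 2) k 0) (node (m + 1) (k % 4 ^ (m + 1))) := by
  simp only [node, show m + 2 - 1 = m + 1 from rfl, Nat.add_sub_cancel, nodeAux, hdigit_succ]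

lemma hdigit_zero_mod_bijOn (n : ℕ) :
    Set.BijOn (fun k => (hdigit (n + 1) k 0, k % 4 ^ n)) (Set.Iio (4 ^ (n + 1)))
      (Set.univ ×ˢ Set.Iio (4 ^ n)) := by
  have hpos : 0 < 4 ^ n := by positivity
  refine ⟨fun k _ => ⟨trivial, Nat.mod_lt k hpos⟩, ?_, ?_⟩
  · intro k hk k' hk' h
    simp only [Prod.mk.injEq, Fin.ext_iff, hdigit_zero_val] at h
    have hq : k / 4 ^ n < 4 := Nat.div_lt_of_lt_mul (by rw [← pow_succ]; exact hk)
    have hq' : k' / 4 ^ n < 4 := Nat.div_lt_of_lt_mul (by rw [← pow_succ]; exact hk')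
    rw [Nat.mod_eq_of_lt hq, Nat.mod_eq_of_lt hq'] at h
    rw [← Nat.div_add_mod k (4 ^ n), ← Nat.div_add_mod k' (4 ^ n), h.1, h.2]
  · rintro ⟨d, r⟩ ⟨-, hr⟩
    refine ⟨4 ^ n * d + r, ?_, ?_⟩
    · have hd : (d : ℕ) + 1 ≤ 4 := d.isLt
      calc 4 ^ n * d + r < 4 ^ n * (d + 1) := by rw [mul_add_one]; exact Nat.add_lt_add_left hr _
        _ ≤ 4 ^ (n + 1) := by rw [pow_succ]; exact Nat.mul_le_mul_left _ hd
    · have hdiv : (4 ^ n * d + r) / 4 ^ n = d := by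
        rw [Nat.mul_add_div hpos, Nat.div_eq_of_lt hr, add_zero]
      simp only [Prod.mk.injEq, Fin.ext_iff, hdigit_zero_val, hdiv, Nat.mod_eq_of_lt d.isLt,
        Nat.mul_add_mod, Nat.mod_eq_of_lt hr, and_self]

def hilbertCell : ℕ → ℕ → ℕ × ℕ
  | 0, _ => (0, 0)
  | n + 1, k => cellT n (hdigit (n + 1) k 0) (hilbertCell n (k % 4 ^ n))

lemma hilbertCell_bijOn (n : ℕ) : Set.BijOn (hilbertCell n) (Set.Iio (4 ^ n)) (grid n) := by
  induction n with
  | zero => simp [grid, hilbertCell, Order.Iio_one, Set.singleton_prod_singleton]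
  | succ n ih =>
    exact (cellT_bijOn n).comp (((Set.bijOn_id _).prodMap ih).comp (hdigit_zero_mod_bijOn n))

lemma node_eq_center (m k : ℕ) : node (m + 1) k = center (m + 1) (hilbertCell (m + 1) k) := by
  induction m generalizing k with
  | zero => exact (Fv_eq_T_center _).trans (T_center 0 _ (by simp [grid]))
  | succ m ih =>
    rw [node_succ, ih, hilbertCell]
    exact T_center _ _ ((hilbertCell_bijOn (m + 1)).mapsTo (Nat.mod_lt _ (by positivity)))

lemma image_center_grid (n : ℕ) :
    center n '' grid n = {p : E2 | ∃ i j : ℕ, i < 2 ^ n ∧ j < 2 ^ n ∧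
        p = pt ((2 * (i : ℝ) + 1) / 2 ^ (n + 1)) ((2 * (j : ℝ) + 1) / 2 ^ (n + 1))} := by
  ext p
  simp only [grid, center, Set.mem_image, Set.mem_prod, Set.mem_Iio, Prod.exists, Set.mem_ofPred_eq,
    and_assoc, eq_comm]

/-- k ↦ node_n(k) is a bijection from {0,…,4ⁿ−1} onto the grid of
sub-square centers {((2i+1)/2^{n+1}, (2j+1)/2^{n+1}) : 0 ≤ i,j ≤ 2ⁿ−1}. -/
theorem node_bijection_onto_centers (n : ℕ) (hn : 1 ≤ n) :
    Set.BijOn (node n) {k : ℕ | k < 4 ^ n}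
      {p : E2 | ∃ i j : ℕ, i < 2 ^ n ∧ j < 2 ^ n ∧
        p = pt ((2 * (i : ℝ) + 1) / 2 ^ (n + 1)) ((2 * (j : ℝ) + 1) / 2 ^ (n + 1))} := by
  obtain ⟨m, rfl⟩ := Nat.exists_eq_add_of_le' hn
  rw [← image_center_grid, show node (m + 1) = center (m + 1) ∘ hilbertCell (m + 1) from
    funext (node_eq_center m)]
  exact (center_injective _).injOn.bijOn_image.comp (hilbertCell_bijOn _)

end
end

section
/- The n-th order Hilbert node sequence is symmetric under reflection in the vertical line x = 1/2 with reversal of the parameter: for every n ≥ 1 and 0 ≤ k < 4^n, if node_n(k) = (x, y) then node_n(4^n − 1 − k) = (1 − x, y). -/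
/-!
The reflection `σ (x, y) = (1 - x, y)` conjugates `T_i` into `T_{3-i}` and maps `F_i` to
`F_{3-i}`, so replacing every digit `q` of the address of a node by `3 - q` reflects the node.
On the other hand `4^n - 1` has all its `n` base-4 digits equal to `3`, so subtracting `k`
from it involves no borrows and replaces each digit `q` of `k` by `3 - q`.
-/

open Matrix

noncomputable section

namespace Nat

theorem mul_sub_one_sub_eq {m c k : ℕ} (hk : k < m * c) :
    m * c - 1 - k = (m - 1 - k % m) + m * (c - 1 - k / m) := by
  have hm : 0 < m := Nat.pos_of_ne_zero (by rintro rfl; simp at hk)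
  have hr : k % m < m := Nat.mod_lt k hm
  have hq : k / m < c := Nat.div_lt_of_lt_mul hk
  have hk' : k % m + m * (k / m) = k := Nat.mod_add_div k m
  have hmul : m * (c - 1 - k / m) + m * (k / m) + m = m * c := by
    rw [← Nat.mul_add, ← Nat.mul_succ]
    congr 1
    omega
  omega

theorem mul_sub_one_sub_div {m c k : ℕ} (hk : k < m * c) :
    (m * c - 1 - k) / m = c - 1 - k / m := by
  have hm : 0 < m := Nat.pos_of_ne_zero (by rintro rfl; simp at hk)
  exact ((Nat.div_mod_unique hm).2 ⟨(mul_sub_one_sub_eq hk).symm, by omega⟩).1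

theorem mul_sub_one_sub_mod {m c k : ℕ} (hk : k < m * c) :
    (m * c - 1 - k) % m = m - 1 - k % m := by
  have hm : 0 < m := Nat.pos_of_ne_zero (by rintro rfl; simp at hk)
  exact ((Nat.div_mod_unique hm).2 ⟨(mul_sub_one_sub_eq hk).symm, by omega⟩).2

theorem pow_sub_one_sub_div_pow_mod {b n e k : ℕ} (he : e < n) (hk : k < b ^ n) :
    (b ^ n - 1 - k) / b ^ e % b = b - 1 - k / b ^ e % b := by
  have hsplit : b ^ n = b ^ e * (b * b ^ (n - e - 1)) := by
    rw [← pow_succ', ← pow_add]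
    congr 1
    omega
  rw [hsplit] at hk ⊢
  rw [mul_sub_one_sub_div hk, mul_sub_one_sub_mod (Nat.div_lt_of_lt_mul hk)]

end Nat

def reflect (p : E2) : E2 := pt (1 - p 0) (p 1)

lemma reflect_pt (x y : ℝ) : reflect (pt x y) = pt (1 - x) y := by
  simp [reflect, pt]

lemma T_rev_reflect (i : Fin 4) (v : E2) : T i.rev (reflect v) = reflect (T i v) := by
  fin_cases i <;>
  · ext j
    fin_cases j <;>
      simp [T, reflect, pt, Hm, hv, toE, dotProduct, Fin.sum_univ_two] <;> ring

lemma Fv_rev (i : Fin 4) : Fv i.rev = reflect (Fv i) := by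
  fin_cases i <;> ext j <;> fin_cases j <;> norm_num [Fv, reflect, pt, Fin.rev]

lemma nodeAux_rev (m : ℕ) (q : ℕ → Fin 4) :
    nodeAux m (fun j => (q j).rev) = reflect (nodeAux m q) := by
  induction m generalizing q with
  | zero => exact Fv_rev (q 0)
  | succ m ih =>
    rw [nodeAux, nodeAux, ih (fun j => q (j + 1))]
    exact T_rev_reflect (q 0) _

lemma hdigit_sub_eq_rev {n k : ℕ} (hn : 1 ≤ n) (hk : k < 4 ^ n) :
    hdigit n (4 ^ n - 1 - k) = fun j => (hdigit n k j).rev := by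
  funext j
  apply Fin.ext
  have hdig := Nat.pow_sub_one_sub_div_pow_mod (e := n - 1 - j) (by omega) hk
  simp only [hdigit, Fin.val_rev, hdig]
  omega

/-- the node sequence is symmetric under reflection in x = 1/2 together
with reversal of the parameter. -/
theorem node_reflection_symmetry (n : ℕ) (hn : 1 ≤ n) (k : ℕ) (hk : k < 4 ^ n)
    (x y : ℝ) (hxy : node n k = pt x y) :
    node n (4 ^ n - 1 - k) = pt (1 - x) y := by
  have hrefl : node n (4 ^ n - 1 - k) = reflect (node n k) := by
    rw [node, node, hdigit_sub_eq_rev hn hk]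
    exact nodeAux_rev _ _
  rw [hrefl, hxy, reflect_pt]

end
end

section
/- Explicit formulas for the nodes neighbouring an exiting corner node: let n ≥ 2, q ∈ {0,1,2}, and k = (q+1)·4^{n−1} − 1 (so k has base-4 digits (q,3,…,3), k+1 has digits (q+1,0,…,0), and k−1 has digits (q,3,…,3,2)). Then node_n(k+1) = (1/2)·h_{q+1} + 2^{1−n}·H_{q+1}·F_0 and node_n(k−1) = (1/2)·h_q + (1/2)·H_q·(1,0) + 2^{1−n}·H_q·v_n, where v_n = (−1/4, 3/4) if n is even and v_n = (−3/4, 1/4) if n is odd. -/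
open Matrix

noncomputable section

/-! The successor `k + 1 = (q + 1) * 4 ^ (n - 1)` has digits `(q + 1, 0, …, 0)`, and `T 0`
halves every multiple of `Fv 0`, so `node n (k + 1) = T (q + 1) (2 ^ (2 - n) • Fv 0)`.
The predecessor `k - 1` has digits `(q, 3, …, 3, 2)`. Write `v_m = exitOffset m`, which
alternates with the parity of `m` between the two vectors of the statement. Then
`Fv 2 = (1, 0) + v_0` and `T 3` maps `(1, 0) + c • v_m` to `(1, 0) + (c / 2) • v_{m+1}`, so
`node n (k - 1) = T q ((1, 0) + 2 ^ (2 - n) • v_n)`. Expanding `T (q + 1)` and `T q` gives the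
two formulas. -/

lemma hdigit_mul_pow_zero (n a : ℕ) (ha : a < 4) : (hdigit n (a * 4 ^ (n - 1)) 0 : ℕ) = a := by
  simp [hdigit, Nat.mod_eq_of_lt ha]

lemma hdigit_mul_pow_of_pos (n a j : ℕ) (hj0 : 0 < j) (hjn : j < n) :
    hdigit n (a * 4 ^ (n - 1)) j = 0 := by
  have hsplit : a * 4 ^ (n - 1) = a * 4 ^ (j - 1) * 4 * 4 ^ (n - 1 - j) := by
    rw [mul_assoc a, ← pow_succ, mul_assoc, ← pow_add]
    congr 2
    omega
  ext
  simp [hdigit, hsplit]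

lemma mul_pow_sub_two_div (n a j : ℕ) (ha : 0 < a) (hj : j < n - 1) :
    (a * 4 ^ (n - 1) - 2) / 4 ^ (n - 1 - j) = a * 4 ^ j - 1 := by
  have hsplit : a * 4 ^ (n - 1) = 4 ^ (n - 1 - j) * (a * 4 ^ j) := by
    rw [mul_left_comm, ← pow_add]
    congr 2
    omega
  have hbase : 1 < 4 ^ (n - 1 - j) := Nat.one_lt_pow (by omega) (by norm_num)
  have hpos : 0 < a * 4 ^ j := by positivity
  rw [hsplit, Nat.mul_sub_div 1 _ _ (by nlinarith), Nat.div_eq_of_lt hbase]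

lemma hdigit_mul_pow_sub_two_zero (n a : ℕ) (hn : 2 ≤ n) (ha0 : 0 < a) (ha : a ≤ 4) :
    (hdigit n (a * 4 ^ (n - 1) - 2) 0 : ℕ) = a - 1 := by
  have h := mul_pow_sub_two_div n a 0 ha0 (by omega)
  simp only [Nat.sub_zero, pow_zero, mul_one] at h
  simp only [hdigit, Nat.sub_zero, h]
  omega

lemma hdigit_mul_pow_sub_two_of_pos (n a j : ℕ) (ha : 0 < a) (hj0 : 0 < j) (hj : j < n - 1) :
    hdigit n (a * 4 ^ (n - 1) - 2) j = 3 := by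
  have h4 : a * 4 ^ j = 4 * (a * 4 ^ (j - 1)) := by
    rw [mul_left_comm, ← pow_succ', Nat.sub_add_cancel hj0]
  have hpos : 0 < a * 4 ^ (j - 1) := by positivity
  ext
  simp only [hdigit, mul_pow_sub_two_div n a j ha hj, h4]
  change (4 * (a * 4 ^ (j - 1)) - 1) % 4 = 3
  omega

lemma hdigit_mul_pow_sub_two_last (n a : ℕ) (hn : 2 ≤ n) (ha : 0 < a) :
    hdigit n (a * 4 ^ (n - 1) - 2) (n - 1) = 2 := by
  have h4 : a * 4 ^ (n - 1) = 4 * (a * 4 ^ (n - 2)) := by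
    rw [mul_left_comm, ← pow_succ']
    congr 2
    omega
  have hpos : 0 < a * 4 ^ (n - 2) := by positivity
  ext
  simp only [hdigit, Nat.sub_self, pow_zero, Nat.div_one, h4]
  change (4 * (a * 4 ^ (n - 2)) - 2) % 4 = 2
  omega

lemma T_apply_smul (i : Fin 4) (c : ℝ) (v : E2) :
    T i (c • v) = (1/2 : ℝ) • hv i + (c / 2) • toE (Hm i *ᵥ v) := by
  simp only [T, WithLp.ofLp_smul, Matrix.mulVec_smul, toE, WithLp.toLp_smul]
  module

lemma T_apply_add_smul (i : Fin 4) (u w : Fin 2 → ℝ) (c : ℝ) :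
    T i (toE u + c • toE w) =
      (1/2 : ℝ) • hv i + (1/2 : ℝ) • toE (Hm i *ᵥ u) + (c / 2) • toE (Hm i *ᵥ w) := by
  simp only [T, toE, WithLp.ofLp_add, WithLp.ofLp_smul, Matrix.mulVec_add,
    Matrix.mulVec_smul, WithLp.toLp_add, WithLp.toLp_smul]
  module

lemma T_zero_smul_Fv_zero (c : ℝ) : T 0 (c • Fv 0) = (c / 2) • Fv 0 := by
  rw [T_apply_smul]
  ext i; fin_cases i <;> simp [hv, Fv, pt, toE, Hm]

def exitOffset (m : ℕ) : Fin 2 → ℝ := if Even m then ![-(1/4), 3/4] else ![-(3/4), 1/4]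

lemma exitOffset_add_two (m : ℕ) : exitOffset (m + 2) = exitOffset m := by
  simp only [exitOffset, Nat.even_add, even_two, iff_true]

lemma Hm_three_mulVec_exitOffset (m : ℕ) : Hm 3 *ᵥ exitOffset m = exitOffset (m + 1) := by
  simp only [exitOffset, Nat.even_add_one]
  split_ifs <;> ext j <;> fin_cases j <;> simp [Hm, Matrix.mulVec, dotProduct, Fin.sum_univ_two]

lemma T_three_exit (m : ℕ) (c : ℝ) :
    T 3 (pt 1 0 + c • toE (exitOffset m)) = pt 1 0 + (c / 2) • toE (exitOffset (m + 1)) := by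
  have h : (1/2 : ℝ) • hv 3 + (1/2 : ℝ) • toE (Hm 3 *ᵥ ![1, 0]) = pt 1 0 := by
    ext j; fin_cases j <;> simp [hv, pt, toE, Hm]
  rw [pt, ← toE, T_apply_add_smul, Hm_three_mulVec_exitOffset, h]
  rfl

lemma nodeAux_of_eq_zero (m : ℕ) (d : ℕ → Fin 4) (h : ∀ j ≤ m, d j = 0) :
    nodeAux m d = ((2 : ℝ) ^ m)⁻¹ • Fv 0 := by
  induction m generalizing d with
  | zero => simp [nodeAux, h 0 le_rfl]
  | succ m ih =>
    rw [nodeAux, h 0 (Nat.zero_le _), ih _ fun j hj => h (j + 1) (by omega), T_zero_smul_Fv_zero]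
    congr 1
    ring

lemma nodeAux_of_eq_three (m : ℕ) (d : ℕ → Fin 4) (h3 : ∀ j < m, d j = 3) (h2 : d m = 2) :
    nodeAux m d = pt 1 0 + ((2 : ℝ) ^ m)⁻¹ • toE (exitOffset m) := by
  induction m generalizing d with
  | zero =>
    rw [nodeAux, h2]
    ext j; fin_cases j <;> norm_num [Fv, pt, toE, exitOffset]
  | succ m ih =>
    rw [nodeAux, h3 0 m.zero_lt_succ, ih _ (fun j hj => h3 (j + 1) (by omega)) h2, T_three_exit]
    congr 2
    ring

lemma node_mul_pow (m : ℕ) (a : Fin 4) :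
    node (m + 2) (a * 4 ^ (m + 1)) = T a (((2 : ℝ) ^ m)⁻¹ • Fv 0) := by
  have hlead : hdigit (m + 2) (a * 4 ^ (m + 1)) 0 = a := Fin.ext (hdigit_mul_pow_zero _ _ a.isLt)
  rw [node, show m + 2 - 1 = m + 1 from rfl, nodeAux, hlead]
  congr 1
  exact nodeAux_of_eq_zero m _ fun j _ =>
    hdigit_mul_pow_of_pos (m + 2) a (j + 1) (by omega) (by omega)

lemma node_succ_mul_pow_sub_two (m : ℕ) (a : Fin 4) :
    node (m + 2) ((a + 1) * 4 ^ (m + 1) - 2) =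
      T a (pt 1 0 + ((2 : ℝ) ^ m)⁻¹ • toE (exitOffset m)) := by
  have hlead : hdigit (m + 2) ((a + 1) * 4 ^ (m + 1) - 2) 0 = a :=
    Fin.ext (hdigit_mul_pow_sub_two_zero _ _ (by omega) (by omega) a.isLt)
  rw [node, show m + 2 - 1 = m + 1 from rfl, nodeAux, hlead]
  congr 1
  exact nodeAux_of_eq_three m _
    (fun j _ => hdigit_mul_pow_sub_two_of_pos (m + 2) _ (j + 1) (by omega) (by omega) (by omega))
    (hdigit_mul_pow_sub_two_last (m + 2) _ (by omega) (by omega))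

/-- explicit formulas for the nodes neighbouring the exiting corner node
k = (q+1)·4^{n−1} − 1. -/
theorem neighbours_of_exiting_corner (n : ℕ) (hn : 2 ≤ n) (q : Fin 4) (hq : (q : ℕ) ≤ 2)
    (k : ℕ) (hk : k = ((q : ℕ) + 1) * 4 ^ (n - 1) - 1) :
    node n (k + 1) =
      (1/2 : ℝ) • hv (q + 1) + (2:ℝ) ^ ((1:ℤ) - n) • toE ((Hm (q + 1)).mulVec (Fv 0)) ∧
    node n (k - 1) =
      (1/2 : ℝ) • hv q + (1/2 : ℝ) • toE ((Hm q).mulVec ![1, 0]) +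
      (2:ℝ) ^ ((1:ℤ) - n) • toE ((Hm q).mulVec
        (if Even n then ![-(1/4), 3/4] else ![-(3/4), 1/4])) := by
  obtain ⟨m, rfl⟩ : ∃ m, n = m + 2 := ⟨n - 2, by omega⟩
  rw [show m + 2 - 1 = m + 1 from rfl] at hk
  have hscale : ((2 : ℝ) ^ m)⁻¹ / 2 = 2 ^ ((1 : ℤ) - (m + 2 : ℕ)) := by
    rw [show (1 : ℤ) - (m + 2 : ℕ) = -(m + 1 : ℕ) by push_cast; ring, _root_.zpow_neg,
      zpow_natCast, pow_succ, mul_inv, div_eq_mul_inv]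
  have hsucc : ((q + 1 : Fin 4) : ℕ) = q + 1 := Fin.val_add_one_of_lt' (by omega)
  have hpos : 0 < ((q : ℕ) + 1) * 4 ^ (m + 1) := by positivity
  constructor
  · rw [show k + 1 = (q + 1 : Fin 4) * 4 ^ (m + 1) by rw [hsucc]; omega, node_mul_pow,
      T_apply_smul, hscale]
  · rw [show k - 1 = (q + 1) * 4 ^ (m + 1) - 2 by omega, node_succ_mul_pow_sub_two, pt, ← toE,
      T_apply_add_smul, hscale, ← exitOffset_add_two]
    rfl
end
end

section
/- (Theorem 1, general form) The displacement across any first-level corner node depends only on the corner type, the quadrant index, and the parity of the order: there exist functions C : {0,1}×{1,2,3} → ℝ² and D : {0,1}×{1,2,3}×{0,1} → ℝ², independent of n, such that for every n ≥ 2 and q ∈ {1,2,3}: if k = q·4^{n−1} − 1 (exiting corner node, type b = 0) or k = q·4^{n−1} (entering corner node, type b = 1), then node_n(k+1) − node_n(k−1) = C(b, q) + 2^{1−n}·D(b, q, n mod 2). -/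
open Matrix

noncomputable section

/-!
Splitting off the leading base-4 digit gives `node (n+1) (4^n a + r) = T a (node n r)`. The two
nodes on either side of a first-level corner are therefore images under `T (q-1)` and `T q` of the
last two, respectively first two, nodes of order `n`. These lie within `O(2^{-n})` of the corners
`(1,0)` and `(0,0)` of the unit square, with closed forms that only depend on the parity of `n`
because `T 0` and `T 3` swap the axes. As `T (q-1)` maps `(1,0)` and `T q` maps `(0,0)` to the same
point, the constant part `C` vanishes and the displacement is exactly `2^{1-n} D`.
-/

lemma T_zero_pt (a b : ℝ) : T 0 (pt a b) = pt (b / 2) (a / 2) := by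
  ext i; fin_cases i <;> simp [T, pt, toE, Hm, hv] <;> ring

lemma T_one_pt (a b : ℝ) : T 1 (pt a b) = pt (a / 2) (b / 2 + 1 / 2) := by
  ext i; fin_cases i <;> simp [T, pt, toE, Hm, hv] <;> ring

lemma T_two_pt (a b : ℝ) : T 2 (pt a b) = pt (a / 2 + 1 / 2) (b / 2 + 1 / 2) := by
  ext i; fin_cases i <;> simp [T, pt, toE, Hm, hv] <;> ring

lemma T_three_pt (a b : ℝ) : T 3 (pt a b) = pt (1 - b / 2) (1 / 2 - a / 2) := by
  ext i; fin_cases i <;> simp [T, pt, toE, Hm, hv] <;> ring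

@[simp] lemma pt_sub (a b c d : ℝ) : pt a b - pt c d = pt (a - c) (b - d) := by
  ext i; fin_cases i <;> simp [pt]

@[simp] lemma pt_smul (r a b : ℝ) : r • pt a b = pt (r * a) (r * b) := by
  ext i; fin_cases i <;> simp [pt]

lemma four_pow_mul_add_div_pow_mod {e n : ℕ} (h : e < n) (a r : ℕ) :
    (4 ^ n * a + r) / 4 ^ e % 4 = r / 4 ^ e % 4 := by
  obtain ⟨d, rfl⟩ : ∃ d, n = e + d + 1 := ⟨n - e - 1, by omega⟩
  rw [show 4 ^ (e + d + 1) * a + r = r + 4 ^ e * (4 * (4 ^ d * a)) by ring,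
    Nat.add_mul_div_left _ _ (by positivity), Nat.add_mul_mod_self_left]

lemma node_succ_s16 {n : ℕ} (hn : 1 ≤ n) (a : Fin 4) {r : ℕ} (hr : r < 4 ^ n) :
    node (n + 1) (4 ^ n * a + r) = T a (node n r) := by
  obtain ⟨m, rfl⟩ : ∃ m, n = m + 1 := ⟨n - 1, by omega⟩
  have leading : hdigit (m + 2) (4 ^ (m + 1) * a + r) 0 = a := by
    ext
    simp [hdigit, Nat.mul_add_div (by positivity : 0 < 4 ^ (m + 1)), Nat.div_eq_of_lt hr]
  have trailing : (fun j => hdigit (m + 2) (4 ^ (m + 1) * a + r) (j + 1)) = hdigit (m + 1) r := by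
    funext j
    ext
    simp only [hdigit, show m + 2 - 1 - (j + 1) = m + 1 - 1 - j by omega]
    exact four_pow_mul_add_div_pow_mod (by omega) a r
  change nodeAux (m + 1) _ = T a (nodeAux m _)
  rw [nodeAux, leading, trailing]

lemma node_mul_four_pow_add {n j : ℕ} (hn : 1 ≤ n) (q : Fin 4) (hj : j < 4 ^ n) :
    node (n + 1) (q * 4 ^ n + j) = T q (node n j) := by
  rw [mul_comm]
  exact node_succ_s16 hn q hj

lemma node_mul_four_pow_sub {n j q : ℕ} (hn : 1 ≤ n) (p : Fin 4) (hpq : q = p + 1)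
    (hj₀ : 0 < j) (hj : j ≤ 4 ^ n) :
    node (n + 1) (q * 4 ^ n - j) = T p (node n (4 ^ n - j)) := by
  rw [← node_succ_s16 hn p (Nat.sub_lt (by positivity) hj₀), hpq, add_one_mul, mul_comm,
    Nat.add_sub_assoc hj]

lemma two_le_four_pow {n : ℕ} (hn : 1 ≤ n) : 2 ≤ 4 ^ n :=
  (Nat.le_self_pow (by omega) 4).trans' (by norm_num)

lemma node_one_eq_Fv (k : Fin 4) : node 1 k = Fv k := by
  change Fv (hdigit 1 k 0) = Fv k
  congr
  ext
  simp [hdigit, Nat.mod_eq_of_lt k.isLt]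

lemma node_zero {n : ℕ} (hn : 1 ≤ n) :
    node n 0 = pt ((1 / 2) ^ (n + 1)) ((1 / 2) ^ (n + 1)) := by
  induction n, hn using Nat.le_induction with
  | base => norm_num [show node 1 0 = Fv 0 from node_one_eq_Fv 0, Fv]
  | succ n hn ih =>
    have h := node_succ_s16 hn 0 (by positivity : 0 < 4 ^ n)
    rw [Fin.val_zero, mul_zero, zero_add] at h
    rw [h, ih, T_zero_pt]
    exact congrArg₂ pt (by ring) (by ring)

lemma node_one {n : ℕ} (hn : 1 ≤ n) :
    node n 1 = if Even n then pt (3 * (1 / 2) ^ (n + 1)) ((1 / 2) ^ (n + 1))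
      else pt ((1 / 2) ^ (n + 1)) (3 * (1 / 2) ^ (n + 1)) := by
  induction n, hn using Nat.le_induction with
  | base => norm_num [show node 1 1 = Fv 1 from node_one_eq_Fv 1, Fv]
  | succ n hn ih =>
    have h := node_succ_s16 hn 0 (one_lt_pow₀ (by norm_num : 1 < 4) (by omega))
    rw [Fin.val_zero, mul_zero, zero_add] at h
    rw [h, ih]
    by_cases hpar : Even n <;>
      simp only [Nat.even_add_one, hpar, not_true_eq_false, not_false_eq_true, ite_true, ite_false,
        T_zero_pt] <;>
      exact congrArg₂ pt (by ring) (by ring)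

lemma node_four_pow_sub_one {n : ℕ} (hn : 1 ≤ n) :
    node n (4 ^ n - 1) = pt (1 - (1 / 2) ^ (n + 1)) ((1 / 2) ^ (n + 1)) := by
  induction n, hn using Nat.le_induction with
  | base => rw [show node 1 (4 ^ 1 - 1) = Fv 3 from node_one_eq_Fv 3]; norm_num [Fv]
  | succ n hn ih =>
    rw [pow_succ', node_mul_four_pow_sub (q := 4) hn 3 rfl one_pos (Nat.one_le_pow _ _ four_pos),
      ih, T_three_pt]
    exact congrArg₂ pt (by ring) (by ring)

lemma node_four_pow_sub_two {n : ℕ} (hn : 1 ≤ n) :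
    node n (4 ^ n - 2) = if Even n then pt (1 - 3 * (1 / 2) ^ (n + 1)) ((1 / 2) ^ (n + 1))
      else pt (1 - (1 / 2) ^ (n + 1)) (3 * (1 / 2) ^ (n + 1)) := by
  induction n, hn using Nat.le_induction with
  | base => rw [show node 1 (4 ^ 1 - 2) = Fv 2 from node_one_eq_Fv 2]; norm_num [Fv]
  | succ n hn ih =>
    rw [pow_succ', node_mul_four_pow_sub (q := 4) hn 3 rfl two_pos (two_le_four_pow hn), ih]
    by_cases hpar : Even n <;>
      simp only [Nat.even_add_one, hpar, not_true_eq_false, not_false_eq_true, ite_true, ite_false,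
        T_three_pt] <;>
      exact congrArg₂ pt (by ring) (by ring)

lemma two_zpow_one_sub_natCast (n : ℕ) : (2 : ℝ) ^ ((1 : ℤ) - n) = 2 * (1 / 2) ^ n := by
  rw [zpow_sub₀ two_ne_zero, zpow_one, zpow_natCast, one_div, inv_pow, div_eq_mul_inv]

def cornerD : Bool → Fin 4 → ℕ → E2
  | false, 1, 0 => pt (-1 / 2) (1 / 2)
  | false, 1, _ => pt 0 1
  | false, 2, 0 => pt (1 / 2) (-1 / 2)
  | false, 2, _ => pt 1 0
  | false, 3, 0 => pt 0 (-1)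
  | false, 3, _ => pt (1 / 2) (-1 / 2)
  | true, 1, 0 => pt 0 1
  | true, 1, _ => pt (1 / 2) (1 / 2)
  | true, 2, 0 => pt (1 / 2) (1 / 2)
  | true, 2, _ => pt 1 0
  | true, 3, 0 => pt (-1 / 2) (-1 / 2)
  | true, 3, _ => pt 0 (-1)
  | _, _, _ => 0

lemma cornerD_succ_mod_two (b : Bool) (q : Fin 4) (n : ℕ) :
    cornerD b q ((n + 1) % 2) = if Even n then cornerD b q 1 else cornerD b q 0 := by
  split_ifs with h <;> rw [Nat.even_iff] at h <;> congr 1 <;> omega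

lemma exit_displacement {n : ℕ} (hn : 1 ≤ n) {p q : Fin 4} (hpq : (q : ℕ) = p + 1) :
    node (n + 1) (q * 4 ^ n) - node (n + 1) (q * 4 ^ n - 2) =
      (2 : ℝ) ^ ((1 : ℤ) - (n + 1 : ℕ)) • cornerD false q ((n + 1) % 2) := by
  have corner := node_mul_four_pow_add hn q (j := 0) (by positivity)
  rw [add_zero] at corner
  rw [corner, node_mul_four_pow_sub hn p hpq two_pos (two_le_four_pow hn), node_zero hn,
    node_four_pow_sub_two hn, two_zpow_one_sub_natCast, cornerD_succ_mod_two]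
  obtain ⟨rfl, rfl⟩ | ⟨rfl, rfl⟩ | ⟨rfl, rfl⟩ :
      p = 0 ∧ q = 1 ∨ p = 1 ∧ q = 2 ∨ p = 2 ∧ q = 3 := by
    simp only [Fin.ext_iff]; omega
  all_goals
    by_cases hpar : Even n <;>
      simp only [hpar, ite_true, ite_false, cornerD, T_zero_pt, T_one_pt, T_two_pt, T_three_pt,
        pt_sub, pt_smul] <;>
      exact congrArg₂ pt (by ring) (by ring)

lemma entry_displacement {n : ℕ} (hn : 1 ≤ n) {p q : Fin 4} (hpq : (q : ℕ) = p + 1) :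
    node (n + 1) (q * 4 ^ n + 1) - node (n + 1) (q * 4 ^ n - 1) =
      (2 : ℝ) ^ ((1 : ℤ) - (n + 1 : ℕ)) • cornerD true q ((n + 1) % 2) := by
  rw [node_mul_four_pow_add hn q (one_lt_pow₀ (by norm_num) (by omega)),
    node_mul_four_pow_sub hn p hpq one_pos (Nat.one_le_pow _ _ four_pos), node_one hn,
    node_four_pow_sub_one hn, two_zpow_one_sub_natCast, cornerD_succ_mod_two]
  obtain ⟨rfl, rfl⟩ | ⟨rfl, rfl⟩ | ⟨rfl, rfl⟩ :
      p = 0 ∧ q = 1 ∨ p = 1 ∧ q = 2 ∨ p = 2 ∧ q = 3 := by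
    simp only [Fin.ext_iff]; omega
  all_goals
    by_cases hpar : Even n <;>
      simp only [hpar, ite_true, ite_false, cornerD, T_zero_pt, T_one_pt, T_two_pt, T_three_pt,
        pt_sub, pt_smul] <;>
      exact congrArg₂ pt (by ring) (by ring)

/-- Theorem 1, general form: the displacement across any first-level
corner node is C(b,q) + 2^{1−n}·D(b,q,n mod 2), with C, D independent of n
(b = false for the exiting corner k = q·4^{n−1} − 1, b = true for the entering
corner k = q·4^{n−1}). -/
theorem corner_displacement_canonical :
    ∃ C : Bool → Fin 4 → E2, ∃ D : Bool → Fin 4 → ℕ → E2,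
      ∀ n : ℕ, 2 ≤ n → ∀ q : Fin 4, 1 ≤ (q : ℕ) → (q : ℕ) ≤ 3 →
        (node n ((q : ℕ) * 4 ^ (n - 1) - 1 + 1) - node n ((q : ℕ) * 4 ^ (n - 1) - 1 - 1) =
          C false q + (2:ℝ) ^ ((1:ℤ) - n) • D false q (n % 2)) ∧
        (node n ((q : ℕ) * 4 ^ (n - 1) + 1) - node n ((q : ℕ) * 4 ^ (n - 1) - 1) =
          C true q + (2:ℝ) ^ ((1:ℤ) - n) • D true q (n % 2)) := by
  refine ⟨0, cornerD, fun n hn q hq₁ hq₃ => ?_⟩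
  obtain ⟨m, rfl⟩ : ∃ m, n = m + 1 := ⟨n - 1, by omega⟩
  obtain ⟨p, hpq⟩ : ∃ p : Fin 4, (q : ℕ) = p + 1 :=
    ⟨⟨q - 1, by omega⟩, (Nat.sub_add_cancel hq₁).symm⟩
  have hcorner : 1 ≤ (q : ℕ) * 4 ^ m := Nat.mul_pos hq₁ (by positivity)
  rw [Nat.add_sub_cancel, Nat.sub_add_cancel hcorner, Nat.sub_sub]
  simp only [Pi.zero_apply, zero_add]
  exact ⟨exit_displacement (by omega) hpq, entry_displacement (by omega) hpq⟩

end
end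

section
/- A blocked non-corner node can be skipped by a single diagonal move: for every n ≥ 1 and every integer k with 1 ≤ k ≤ 4^n − 2 whose last base-4 digit is 1 or 2 (i.e. k mod 4 ∈ {1,2}), the Euclidean distance between the node preceding and the node succeeding node_n(k) satisfies ‖node_n(k+1) − node_n(k−1)‖ = √2 · 2^{−n} (equivalently, the sup-norm distance is 2^{−n}, so the two corresponding sub-squares touch). -/
open Matrix

noncomputable section

/-! The base-4 expansions of `k - 1` and `k + 1` share all digits but the last, which differ by 2
modulo 4; the corresponding base nodes `Fv (i + 2)` and `Fv i` are opposite corners of a square of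
side `1/2`. Each `T i` acts on differences as `v ↦ Hm i *ᵥ v / 2`, and every `Hm i` is a signed
permutation matrix, so a difference `(±a, ±a)` becomes `(±a/2, ±a/2)` at each of the `n - 1`
remaining levels. -/

def IsDiagonal (a : ℝ) (v : E2) : Prop := |v 0| = a ∧ |v 1| = a

namespace IsDiagonal

variable {a : ℝ} {v : E2}

theorem nonneg (h : IsDiagonal a v) : 0 ≤ a := h.1 ▸ abs_nonneg _

theorem smul (c : ℝ) (h : IsDiagonal a v) : IsDiagonal (|c| * a) (c • v) := by
  simp only [IsDiagonal, PiLp.smul_apply, smul_eq_mul, abs_mul, h.1, h.2, and_self]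

theorem Hm_mulVec (i : Fin 4) (h : IsDiagonal a v) : IsDiagonal a (toE (Hm i *ᵥ v)) := by
  obtain ⟨h0, h1⟩ := h
  fin_cases i <;> simp [IsDiagonal, toE, Hm, vecHead, vecTail, h0, h1]

theorem T_sub (i : Fin 4) {u w : E2} (h : IsDiagonal a (u - w)) :
    IsDiagonal (a / 2) (T i u - T i w) := by
  have hsub : T i u - T i w = (1 / 2 : ℝ) • toE (Hm i *ᵥ WithLp.ofLp (u - w)) := by
    simp only [T, toE]
    rw [add_sub_add_right_eq_sub, ← smul_sub, ← WithLp.toLp_sub, ← Matrix.mulVec_sub,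
      WithLp.ofLp_sub]
  rw [hsub]
  convert (h.Hm_mulVec i).smul (1 / 2) using 1
  rw [abs_of_pos one_half_pos]
  ring

theorem norm_eq (h : IsDiagonal a v) : ‖v‖ = Real.sqrt 2 * a := by
  rw [EuclideanSpace.norm_eq, Fin.sum_univ_two, Real.norm_eq_abs, Real.norm_eq_abs, h.1, h.2,
    ← two_mul, Real.sqrt_mul zero_le_two, Real.sqrt_sq h.nonneg]

theorem norm_ofLp_eq (h : IsDiagonal a v) : ‖WithLp.ofLp v‖ = a := by
  refine le_antisymm ((pi_norm_le_iff_of_nonneg h.nonneg).2 fun i => ?_) ?_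
  · fin_cases i
    · exact (Real.norm_eq_abs _).trans_le h.1.le
    · exact (Real.norm_eq_abs _).trans_le h.2.le
  · exact h.1 ▸ (Real.norm_eq_abs _).symm.trans_le (norm_le_pi_norm _ 0)

end IsDiagonal

theorem isDiagonal_Fv_add_two_sub (i : Fin 4) : IsDiagonal (1 / 2) (Fv (i + 2) - Fv i) := by
  fin_cases i <;> simp only [Fin.reduceFinMk, Fin.reduceAdd] <;>
    norm_num [IsDiagonal, Fv, pt, abs_of_pos, abs_of_neg]

theorem isDiagonal_nodeAux_sub {m : ℕ} {q q' : ℕ → Fin 4} {a : ℝ} (hq : ∀ j < m, q j = q' j)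
    (h : IsDiagonal a (Fv (q m) - Fv (q' m))) :
    IsDiagonal (a / 2 ^ m) (nodeAux m q - nodeAux m q') := by
  induction m generalizing q q' a with
  | zero => simpa [nodeAux] using h
  | succ m ih =>
    have htail := ih (q := fun j => q (j + 1)) (q' := fun j => q' (j + 1))
      (fun j hj => hq (j + 1) (by omega)) h
    rw [nodeAux, nodeAux, hq 0 m.succ_pos, pow_succ, ← div_div]
    exact htail.T_sub _

theorem hdigit_eq_of_div_four_eq {n a b j : ℕ} (hab : a / 4 = b / 4) (hj : j < n - 1) :
    hdigit n a j = hdigit n b j := by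
  have hdiv : ∀ c, c / 4 ^ (n - 1 - j) = c / 4 / 4 ^ (n - 1 - j - 1) := fun c => by
    rw [Nat.div_div_eq_div_mul, ← pow_succ', Nat.sub_add_cancel (by omega)]
  ext
  simp only [hdigit, hdiv a, hdiv b, hab]

theorem hdigit_last_add_two (n k : ℕ) : hdigit n (k + 2) (n - 1) = hdigit n k (n - 1) + 2 := by
  ext
  simp only [hdigit, Nat.sub_self, pow_zero, Nat.div_one, Fin.val_add]
  omega

theorem skip_noncorner_node_general (n : ℕ) (hn : 1 ≤ n) (k : ℕ)
    (hmod : k % 4 = 1 ∨ k % 4 = 2) :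
    ‖node n (k + 1) - node n (k - 1)‖ = Real.sqrt 2 * ((1:ℝ) / 2 ^ n) ∧
    ‖(fun i : Fin 2 => node n (k + 1) i - node n (k - 1) i : Fin 2 → ℝ)‖ =
      (1:ℝ) / 2 ^ n := by
  have hlast : hdigit n (k + 1) (n - 1) = hdigit n (k - 1) (n - 1) + 2 := by
    rw [← hdigit_last_add_two]
    congr 1
    omega
  have hdiag : IsDiagonal (1 / 2 ^ n) (node n (k + 1) - node n (k - 1)) := by
    have h := isDiagonal_nodeAux_sub
      (fun j hj => hdigit_eq_of_div_four_eq (by omega) hj)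
      (hlast ▸ isDiagonal_Fv_add_two_sub (hdigit n (k - 1) (n - 1)))
    rwa [div_div, ← pow_succ', Nat.sub_add_cancel hn] at h
  exact ⟨hdiag.norm_eq, hdiag.norm_ofLp_eq⟩

/-- a blocked non-corner node (last base-4 digit 1 or 2) can be skipped
diagonally: the nodes before and after it are at Euclidean distance √2·2^{−n}
(equivalently, sup-norm distance 2^{−n}). -/
theorem skip_noncorner_node (n : ℕ) (hn : 1 ≤ n) (k : ℕ) (h1 : 1 ≤ k)
    (h2 : k ≤ 4 ^ n - 2) (hmod : k % 4 = 1 ∨ k % 4 = 2) :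
    ‖node n (k + 1) - node n (k - 1)‖ = Real.sqrt 2 * ((1:ℝ) / 2 ^ n) ∧
    ‖(fun i : Fin 2 => node n (k + 1) i - node n (k - 1) i : Fin 2 → ℝ)‖ =
      (1:ℝ) / 2 ^ n :=
  skip_noncorner_node_general n hn k hmod

end
end
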